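/- For positive parameters m, M_H, M_T, r, l, the mass matrix M(θ) of the three-link biped is positive definite for every θ ∈ ℝ³. -/

import Mathlib

open Matrix Real

noncomputable def bipedM (m MH MT r l : ℝ) (θ : Fin 3 → ℝ) :
    Matrix (Fin 3) (Fin 3) ℝ :=
  !![(5/4*m + MH + MT)*r^2, -(1/2)*m*r^2*cos (θ 0 - θ 1), MT*r*l*cos (θ 0 - θ 2);
     -(1/2)*m*r^2*cos (θ 0 - θ 1), (1/4)*m*r^2, 0;
     MT*r*l*cos (θ 0 - θ 2), 0, MT*l^2]

/-! The mass matrix is an arrowhead matrix with positive diagonal block `diag(m r²/4, M_T l²)`,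
so it is positive definite as soon as the Schur complement of that block is positive; here that
complement is `r² ((5/4 - cos²(θ₁-θ₂)) m + M_H + (1 - cos²(θ₁-θ₃)) M_T) ≥ r² (m/4 + M_H)`. -/

/-- Completing the square twice (an `LDLᵀ` factorisation), scaled by `d * e` to avoid division. -/
lemma arrowhead_quadForm_mul {a b c d e : ℝ} (x : Fin 3 → ℝ) :
    d * e * (star x ⬝ᵥ !![a, b, c; b, d, 0; c, 0, e] *ᵥ x) =
      e * (b * x 0 + d * x 1) ^ 2 + d * (c * x 0 + e * x 2) ^ 2 +
        (a * d * e - b ^ 2 * e - c ^ 2 * d) * x 0 ^ 2 := by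
  simp only [dotProduct, Pi.star_apply, star_trivial, mulVec, of_apply, cons_val', cons_val_fin_one,
    Fin.sum_univ_three, cons_val_zero, cons_val_one, cons_val]
  ring

lemma posDef_arrowhead {a b c d e : ℝ} (hd : 0 < d) (he : 0 < e)
    (hdet : b ^ 2 * e + c ^ 2 * d < a * d * e) :
    (!![a, b, c; b, d, 0; c, 0, e]).PosDef := by
  rw [posDef_iff_dotProduct_mulVec]
  refine ⟨?_, fun x hx => ?_⟩
  · ext i j
    fin_cases i <;> fin_cases j <;> simp
  refine pos_of_mul_pos_right ?_ (mul_pos hd he).le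
  rw [arrowhead_quadForm_mul]
  have hschur : 0 < a * d * e - b ^ 2 * e - c ^ 2 * d := by linarith
  by_cases h0 : x 0 = 0
  · have h12 : x 1 ≠ 0 ∨ x 2 ≠ 0 := by
      by_contra! h
      exact hx (funext fun i => by fin_cases i <;> simp [h0, h.1, h.2])
    rcases h12 with h1 | h2
    · have : 0 < e * (b * x 0 + d * x 1) ^ 2 := by simp only [h0, mul_zero, zero_add]; positivity
      positivity
    · have : 0 < d * (c * x 0 + e * x 2) ^ 2 := by simp only [h0, mul_zero, zero_add]; positivity
      positivity
  · have : 0 < (a * d * e - b ^ 2 * e - c ^ 2 * d) * x 0 ^ 2 := by positivity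
    positivity

theorem stmt6 (m MH MT r l : ℝ) (hm : 0 < m) (hMH : 0 < MH) (hMT : 0 < MT)
    (hr : 0 < r) (hl : 0 < l) (θ : Fin 3 → ℝ) :
    (bipedM m MH MT r l θ).PosDef := by
  have hc1 := cos_sq_le_one (θ 0 - θ 1)
  have hc2 := cos_sq_le_one (θ 0 - θ 2)
  have hcos : m * cos (θ 0 - θ 1) ^ 2 + MT * cos (θ 0 - θ 2) ^ 2 < 5/4 * m + MH + MT := by
    nlinarith
  have hscale : 0 < m * MT * r ^ 4 * l ^ 2 / 4 := by positivity
  refine posDef_arrowhead (by positivity) (by positivity) ?_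
  linear_combination mul_lt_mul_of_pos_left hcos hscale
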